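/- Let A be a real m×n payoff matrix defining a finite two-player zero-sum strategic-form game, and suppose the pure strategy k of player 1 is weakly dominated by some mixed strategy of player 1. Then k is a strong mistake: in every Nash equilibrium (x*, y*) in which x* is not weakly dominated, x*_k = 0. -/

import Mathlib

open Matrix BigOperators

/-- A mixed strategy: nonnegative components summing to 1. -/
def IsMixed {I : Type*} [Fintype I] (x : I → ℝ) : Prop :=
  (∀ i, 0 ≤ x i) ∧ ∑ i, x i = 1

/-- Player 1's expected payoff xᵀAy. -/
def payoff {I J : Type*} [Fintype I] [Fintype J]
    (A : Matrix I J ℝ) (x : I → ℝ) (y : J → ℝ) : ℝ :=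
  ∑ i, ∑ j, x i * A i j * y j

/-- Nash equilibrium of the zero-sum game with player-1 payoff matrix `A`. -/
def IsNash {I J : Type*} [Fintype I] [Fintype J]
    (A : Matrix I J ℝ) (x : I → ℝ) (y : J → ℝ) : Prop :=
  IsMixed x ∧ IsMixed y ∧
  (∀ x', IsMixed x' → payoff A x' y ≤ payoff A x y) ∧
  (∀ y', IsMixed y' → payoff A x y ≤ payoff A x y')

/-- A mixed strategy `x` of player 1 is weakly dominated: some mixed strategy `x''` does at
least as well against every pure strategy of player 2, strictly better against one. -/
def WeaklyDominatedMixed {I J : Type*} [Fintype I] [Fintype J]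
    (A : Matrix I J ℝ) (x : I → ℝ) : Prop :=
  ∃ x'', IsMixed x'' ∧ (∀ j, ∑ i, x i * A i j ≤ ∑ i, x'' i * A i j) ∧
    (∃ j, ∑ i, x i * A i j < ∑ i, x'' i * A i j)

/-!
If a mixed strategy `x` puts weight `x k > 0` on a pure strategy `k` that is weakly dominated
by `x'`, move that weight onto `x'`: the mixed strategy `x + x k • (x' - e_k)` earns
`x k * ((x'ᵀA)_j - A k j) ≥ 0` more than `x` against every column `j`, and strictly more
against some column, so `x` is weakly dominated.
-/

def PureWeaklyDominated {I J : Type*} [Fintype I] (A : Matrix I J ℝ) (k : I) : Prop :=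
  ∃ x', IsMixed x' ∧ (∀ j, A k j ≤ ∑ i, x' i * A i j) ∧ ∃ j, A k j < ∑ i, x' i * A i j

section MoveWeight

variable {I J : Type*} [Fintype I] [DecidableEq I]

theorem IsMixed.add_smul_sub_single {x x' : I → ℝ} (hx : IsMixed x) (hx' : IsMixed x')
    (k : I) : IsMixed (x + x k • (x' - Pi.single k 1)) := by
  refine ⟨fun i => ?_, ?_⟩
  · by_cases hik : i = k
    · subst hik
      have hxi : x i + x i * (x' i - 1) = x i * x' i := by ring
      simpa [hxi] using mul_nonneg (hx.1 i) (hx'.1 i)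
    · simpa [hik] using add_nonneg (hx.1 i) (mul_nonneg (hx.1 k) (hx'.1 i))
  · simp [Finset.sum_add_distrib, Finset.sum_sub_distrib, ← Finset.mul_sum, hx.2, hx'.2]

theorem vecMul_add_smul_sub_single (A : Matrix I J ℝ) (x x' : I → ℝ) (k : I) :
    (x + x k • (x' - Pi.single k 1)) ᵥ* A = x ᵥ* A + x k • (x' ᵥ* A - A k) := by
  rw [add_vecMul, smul_vecMul, sub_vecMul, single_one_vecMul, row]

end MoveWeight

theorem IsMixed.weaklyDominatedMixed_of_pureWeaklyDominated {I J : Type*} [Fintype I]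
    [Fintype J] {A : Matrix I J ℝ} {x : I → ℝ} {k : I} (hx : IsMixed x) (hk : 0 < x k)
    (hdom : PureWeaklyDominated A k) : WeaklyDominatedMixed A x := by
  classical
  obtain ⟨x', hx', hle, j₀, hlt⟩ := hdom
  set y := x + x k • (x' - Pi.single k 1) with hy
  have hgain (j : J) : (y ᵥ* A) j = (x ᵥ* A) j + x k * ((x' ᵥ* A) j - A k j) := by
    rw [hy, vecMul_add_smul_sub_single]
    rfl
  refine ⟨y, hx.add_smul_sub_single hx' k, fun j => ?_, j₀, ?_⟩
  · change (x ᵥ* A) j ≤ (y ᵥ* A) j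
    rw [hgain]
    exact le_add_of_nonneg_right (mul_nonneg hk.le (sub_nonneg.2 (hle j)))
  · change (x ᵥ* A) j₀ < (y ᵥ* A) j₀
    rw [hgain]
    exact lt_add_of_pos_right _ (mul_pos hk (sub_pos.2 hlt))

/-- If pure strategy `k` of player 1 is weakly dominated by some mixed strategy of player 1,
then `k` is a strong mistake: in every Nash equilibrium `(x*, y*)` in which `x*` is not
weakly dominated, `x*_k = 0`. -/
theorem weakly_dominated_is_strong_mistake {m n : ℕ}
    (A : Matrix (Fin m) (Fin n) ℝ) (k : Fin m)
    (hdom : ∃ x', IsMixed x' ∧ (∀ j, A k j ≤ ∑ i, x' i * A i j) ∧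
      (∃ j, A k j < ∑ i, x' i * A i j)) :
    ∀ xstar ystar, IsNash A xstar ystar → ¬ WeaklyDominatedMixed A xstar → xstar k = 0 := by
  intro xstar ystar hNash hundominated
  by_contra hk
  have hpos : 0 < xstar k := lt_of_le_of_ne (hNash.1.1 k) (Ne.symm hk)
  exact hundominated (hNash.1.weaklyDominatedMixed_of_pureWeaklyDominated hpos hdom)
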